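/- Fix integers k ≥ 1 and n > k, and any m ≥ 1 and type distributions G over m types for n agents. Then the infimum over all m' ≥ 1 and all type distributions G' over m' types for n agents of sup_{J'∈{1,...,m'}, ρ'∈(0,1]} innerLP^{OST(J',ρ')/Proph}_{k,n}(G') is at most sup_{J∈{1,...,m}, ρ∈(0,1]} min{ P(Σ_{i=1}^{n-1} X_i(J,ρ) < k), E[min{Σ_{i=1}^{n-1} X_i(J,ρ), k}]/k }, where X_1(J,ρ), ..., X_{n-1}(J,ρ) are independent Bernoulli random variables with success probabilities τ_i(J,ρ) = (1-ρ)·G_{i,J-1} + ρ·G_{iJ}. -/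

import Mathlib

open Finset

/-- The polytope `P(k,n)` of state/acceptance probability vectors. -/
def memP (k n : ℕ) (x y : ℕ → ℕ → ℝ) : Prop :=
  x 1 k = 1 ∧
  (∀ l, 1 ≤ l → l < k → x 1 l = 0) ∧
  (∀ i ∈ Finset.Icc 2 n, ∀ l ∈ Finset.Icc 1 k,
    x i l = x (i-1) l - y (i-1) l + (if l < k then y (i-1) (l+1) else 0)) ∧
  (∀ i ∈ Finset.Icc 1 n, ∀ l ∈ Finset.Icc 1 k, 0 ≤ y i l ∧ y i l ≤ x i l)

/-- `G` is a valid family of type distributions over `m` types for `n` agents. -/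
def IsTypeDist (n m : ℕ) (G : ℕ → ℕ → ℝ) : Prop :=
  ∀ i ∈ Finset.Icc 1 n, G i 0 = 0 ∧ G i m = 1 ∧ ∀ j ∈ Finset.Icc 1 m, G i (j-1) ≤ G i j

/-- `E[min{X_1+...+X_t, k}]` for independent Bernoulli `X_i` with success probabilities `p i`. -/
noncomputable def eMinBer (p : ℕ → ℝ) (t k : ℕ) : ℝ :=
  ∑ S ∈ (Finset.Icc 1 t).powerset,
    (∏ i ∈ S, p i) * (∏ i ∈ Finset.Icc 1 t \ S, (1 - p i)) * min (S.card : ℝ) (k : ℝ)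

/-- `P(X_1+...+X_t < k)` for independent Bernoulli `X_i` with success probabilities `p i`. -/
noncomputable def probLt (p : ℕ → ℝ) (t k : ℕ) : ℝ :=
  ∑ S ∈ (Finset.Icc 1 t).powerset.filter (fun S => S.card < k),
    (∏ i ∈ S, p i) * ∏ i ∈ Finset.Icc 1 t \ S, (1 - p i)

noncomputable def QProph (k n : ℕ) (G : ℕ → ℕ → ℝ) (j : ℕ) : ℝ :=
  eMinBer (fun i => G i j) n k

noncomputable def QExAnte (k n : ℕ) (G : ℕ → ℕ → ℝ) (j : ℕ) : ℝ :=
  min (∑ i ∈ Finset.Icc 1 n, G i j) (k : ℝ)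

noncomputable def coverSum (k n : ℕ) (G : ℕ → ℕ → ℝ) (j : ℕ) (x y : ℕ → ℕ → ℝ) : ℝ :=
  ∑ i ∈ Finset.Icc 1 n, ∑ l ∈ Finset.Icc 1 k, min (y i l) (G i j * x i l)

/-- `τ_i(J,ρ)`. -/
noncomputable def tauOf (G : ℕ → ℕ → ℝ) (J : ℕ) (ρ : ℝ) (i : ℕ) : ℝ :=
  (1 - ρ) * G i (J-1) + ρ * G i J

/-- The simplified dual LP `innerLP^{OST(J,ρ)/·}_{k,n}(G)` with coefficients `Q`. -/
noncomputable def innerLP_OST (k n m : ℕ) (G : ℕ → ℕ → ℝ) (J : ℕ) (ρ : ℝ) (Q : ℕ → ℝ) : ℝ :=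
  sSup {θ : ℝ | ∃ x y, memP k n x y ∧
    (∀ i ∈ Finset.Icc 1 n, ∀ l ∈ Finset.Icc 1 k, y i l = tauOf G J ρ i * x i l) ∧
    ∀ j ∈ Finset.Icc 1 m, θ * Q j ≤ coverSum k n G j x y}

/-!
Given `G`, let `G'` add two types `1` and `m + 2` of probability zero for agents `1, …, n - 1`,
and let agent `n` have type `1` with probability `a` and type `m + 2` otherwise. Under the
policy `y = τ x` the states are forced, `x_i^l = P(X_1 + ⋯ + X_{i-1} = k - l)`, so the
constraint of type `j` reads `θ Q_j ≤ ∑ i, min (τ_i, G'_{ij}) P(X_1 + ⋯ + X_{i-1} < k)`.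
Type `1`, with `Q_1 = a`, gives `θ ≤ P(X_1 + ⋯ + X_{n-1} < k)`; type `m + 1`, with
`Q_{m+1} = k`, gives `θ k ≤ E[min {X_1 + ⋯ + X_{n-1}, k}] + a`. On agents `1, …, n - 1` the
thresholds of `G'` are those of `G` shifted by one type, or identically `0` or `1` at the two
new types, where the bound is `0`. So the value of `G'` is at most the right-hand side plus `a`,
and `a` can be taken arbitrarily small.
-/

/-- `E[f(X_1 + ⋯ + X_t)]` for independent `X_i ~ Bernoulli(p i)`. -/
noncomputable def expectBernSum (p : ℕ → ℝ) (t : ℕ) (f : ℕ → ℝ) : ℝ :=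
  ∑ S ∈ (Icc 1 t).powerset, (∏ i ∈ S, p i) * (∏ i ∈ Icc 1 t \ S, (1 - p i)) * f S.card

namespace expectBernSum

variable {p : ℕ → ℝ} {t : ℕ} {f g : ℕ → ℝ}

lemma zero_right (p : ℕ → ℝ) (f : ℕ → ℝ) : expectBernSum p 0 f = f 0 := by
  simp [expectBernSum]

lemma succ_right (p : ℕ → ℝ) (t : ℕ) (f : ℕ → ℝ) :
    expectBernSum p (t + 1) f =
      (1 - p (t + 1)) * expectBernSum p t f +
        p (t + 1) * expectBernSum p t (fun s => f (s + 1)) := by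
  have hnot : t + 1 ∉ Icc 1 t := by simp
  simp only [expectBernSum, ← insert_Icc_right_eq_Icc_add_one (Nat.le_add_left 1 t),
    sum_powerset_insert hnot, mul_sum]
  congr 1 <;> refine sum_congr rfl fun S hS => ?_
  all_goals have hS : t + 1 ∉ S := fun h => hnot (mem_powerset.1 hS h)
  · rw [insert_sdiff_of_notMem _ hS, prod_insert (by simp [hnot])]
    ring
  · rw [insert_sdiff_insert, sdiff_insert_of_notMem hnot, prod_insert hS, card_insert_of_notMem hS]
    ring

lemma add (p : ℕ → ℝ) (t : ℕ) (f g : ℕ → ℝ) :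
    expectBernSum p t (f + g) = expectBernSum p t f + expectBernSum p t g := by
  simp only [expectBernSum, Pi.add_apply, mul_add, sum_add_distrib]

lemma sum {ι : Type*} (p : ℕ → ℝ) (t : ℕ) (L : Finset ι) (f : ι → ℕ → ℝ) :
    expectBernSum p t (fun s => ∑ l ∈ L, f l s) = ∑ l ∈ L, expectBernSum p t (f l) := by
  simp only [expectBernSum, mul_sum]
  exact sum_comm

lemma const (p : ℕ → ℝ) (t : ℕ) (c : ℝ) : expectBernSum p t (fun _ => c) = c := by
  induction t with
  | zero => exact zero_right p _
  | succ t ih => rw [succ_right, ih]; ring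

lemma congr_left {q : ℕ → ℝ} (h : ∀ i ∈ Icc 1 t, p i = q i) (f : ℕ → ℝ) :
    expectBernSum p t f = expectBernSum q t f := by
  refine sum_congr rfl fun S hS => ?_
  have hS : ∏ i ∈ S, p i = ∏ i ∈ S, q i := prod_congr rfl fun i hi => h i (mem_powerset.1 hS hi)
  have hSc : ∏ i ∈ Icc 1 t \ S, (1 - p i) = ∏ i ∈ Icc 1 t \ S, (1 - q i) :=
    prod_congr rfl fun i hi => by rw [h i (mem_sdiff.1 hi).1]
  rw [hS, hSc]

lemma mono (hp : ∀ i ∈ Icc 1 t, p i ∈ Set.Icc 0 1) (hfg : ∀ s, f s ≤ g s) :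
    expectBernSum p t f ≤ expectBernSum p t g := by
  induction t generalizing f g with
  | zero => simpa only [zero_right] using hfg 0
  | succ t ih =>
    have hp' : ∀ i ∈ Icc 1 t, p i ∈ Set.Icc 0 1 := fun i hi =>
      hp i (Icc_subset_Icc_right t.le_succ hi)
    obtain ⟨h0, h1⟩ := hp (t + 1) (by simp)
    rw [succ_right, succ_right]
    exact add_le_add (mul_le_mul_of_nonneg_left (ih hp' hfg) (sub_nonneg.2 h1))
      (mul_le_mul_of_nonneg_left (ih hp' fun s => hfg (s + 1)) h0)

lemma of_forall_eq_zero (h : ∀ i ∈ Icc 1 t, p i = 0) (f : ℕ → ℝ) :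
    expectBernSum p t f = f 0 := by
  rw [congr_left h]
  clear h
  induction t generalizing f with
  | zero => exact zero_right _ f
  | succ t ih => simp [succ_right, ih]

lemma of_forall_eq_one (h : ∀ i ∈ Icc 1 t, p i = 1) (f : ℕ → ℝ) :
    expectBernSum p t f = f t := by
  rw [congr_left h]
  clear h
  induction t generalizing f with
  | zero => exact zero_right _ f
  | succ t ih => simp [succ_right, ih]

end expectBernSum

lemma eMinBer_eq_expectBernSum (p : ℕ → ℝ) (t k : ℕ) :
    eMinBer p t k = expectBernSum p t (fun s => min (s : ℝ) k) := rfl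

lemma probLt_eq_expectBernSum (p : ℕ → ℝ) (t k : ℕ) :
    probLt p t k = expectBernSum p t (fun s => if s < k then 1 else 0) := by
  simp only [probLt, expectBernSum, sum_filter, mul_ite, mul_one, mul_zero]

section Bernoulli

variable {p : ℕ → ℝ} {t k : ℕ}

lemma probLt_nonneg (hp : ∀ i ∈ Icc 1 t, p i ∈ Set.Icc 0 1) : 0 ≤ probLt p t k := by
  rw [probLt_eq_expectBernSum]
  refine (expectBernSum.const p t 0).ge.trans (expectBernSum.mono hp fun s => ?_)
  split_ifs <;> norm_num

lemma probLt_le_one (hp : ∀ i ∈ Icc 1 t, p i ∈ Set.Icc 0 1) : probLt p t k ≤ 1 := by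
  rw [probLt_eq_expectBernSum]
  refine (expectBernSum.mono hp fun s => ?_).trans (expectBernSum.const p t 1).le
  split_ifs <;> norm_num

lemma eMinBer_nonneg (hp : ∀ i ∈ Icc 1 t, p i ∈ Set.Icc 0 1) : 0 ≤ eMinBer p t k := by
  rw [eMinBer_eq_expectBernSum]
  exact (expectBernSum.const p t 0).ge.trans (expectBernSum.mono hp fun s => by positivity)

lemma min_probLt_eMinBer_div_mem_Icc (hp : ∀ i ∈ Icc 1 t, p i ∈ Set.Icc 0 1) :
    min (probLt p t k) (eMinBer p t k / k) ∈ Set.Icc 0 1 :=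
  ⟨le_min (probLt_nonneg hp) (div_nonneg (eMinBer_nonneg hp) k.cast_nonneg),
    (min_le_left _ _).trans (probLt_le_one hp)⟩

lemma eMinBer_succ (p : ℕ → ℝ) (t k : ℕ) :
    eMinBer p (t + 1) k = eMinBer p t k + p (t + 1) * probLt p t k := by
  have hmin : (fun s : ℕ => min ((s + 1 : ℕ) : ℝ) k) =
      (fun s : ℕ => min (s : ℝ) k) + (fun s => if s < k then 1 else 0) := by
    funext s
    simp only [Pi.add_apply]
    split_ifs with hs
    · rw [min_eq_left (by exact_mod_cast hs), min_eq_left (by exact_mod_cast hs.le)]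
      push_cast; ring
    · rw [min_eq_right (by exact_mod_cast (not_lt.1 hs).trans s.le_succ),
        min_eq_right (by exact_mod_cast not_lt.1 hs), add_zero]
  rw [eMinBer_eq_expectBernSum, expectBernSum.succ_right, hmin, expectBernSum.add,
    ← eMinBer_eq_expectBernSum, ← probLt_eq_expectBernSum]
  ring

lemma eMinBer_eq_sum_mul_probLt (p : ℕ → ℝ) (t k : ℕ) :
    eMinBer p t k = ∑ i ∈ Icc 1 t, p i * probLt p (i - 1) k := by
  induction t with
  | zero => simp [eMinBer_eq_expectBernSum, expectBernSum.zero_right]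
  | succ t ih =>
    rw [eMinBer_succ, ih, sum_Icc_succ_top (Nat.le_add_left 1 t), Nat.add_sub_cancel]

lemma eMinBer_succ_of_forall_eq_zero (hk : 1 ≤ k) (h : ∀ i ∈ Icc 1 t, p i = 0) :
    eMinBer p (t + 1) k = p (t + 1) := by
  rw [eMinBer_succ, eMinBer_eq_expectBernSum, probLt_eq_expectBernSum,
    expectBernSum.of_forall_eq_zero h, expectBernSum.of_forall_eq_zero h,
    if_pos (show 0 < k from hk)]
  simp

lemma eMinBer_succ_of_forall_eq_one (hkt : k ≤ t) (h : ∀ i ∈ Icc 1 t, p i = 1) :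
    eMinBer p (t + 1) k = k := by
  rw [eMinBer_succ, eMinBer_eq_expectBernSum, probLt_eq_expectBernSum,
    expectBernSum.of_forall_eq_one h, expectBernSum.of_forall_eq_one h, if_neg (not_lt.2 hkt),
    min_eq_right (by exact_mod_cast hkt)]
  ring

end Bernoulli

namespace memP

variable {k n : ℕ} {x y : ℕ → ℕ → ℝ} {τ : ℕ → ℝ}

lemma state_eq_expectBernSum (hP : memP k n x y)
    (hy : ∀ i ∈ Icc 1 n, ∀ l ∈ Icc 1 k, y i l = τ i * x i l) {t : ℕ} (ht : t < n) :
    ∀ l ∈ Icc 1 k, x (t + 1) l = expectBernSum τ t (fun s => if s + l = k then 1 else 0) := by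
  obtain ⟨hx1k, hx1l, hrec, -⟩ := hP
  induction t with
  | zero =>
    intro l hl
    simp only [expectBernSum.zero_right, zero_add]
    rcases (mem_Icc.1 hl).2.lt_or_eq with hlk | rfl
    · rw [hx1l l (mem_Icc.1 hl).1 hlk, if_neg hlk.ne]
    · rw [hx1k, if_pos rfl]
  | succ t ih =>
    intro l hl
    have hτ := hy (t + 1) (by simp; omega)
    rw [hrec (t + 1 + 1) (by simp; omega) l hl, Nat.add_sub_cancel, expectBernSum.succ_right,
      hτ l hl, ih (by omega) l hl]
    rcases (mem_Icc.1 hl).2.lt_or_eq with hlk | rfl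
    · have hshift : (fun s => if s + 1 + l = k then (1 : ℝ) else 0) =
          fun s => if s + (l + 1) = k then 1 else 0 := by
        simp only [add_assoc, add_comm 1 l]
      rw [if_pos hlk, hτ (l + 1) (by simp; omega), ih (by omega) (l + 1) (by simp; omega), hshift]
      ring
    · have hzero : (fun s => if s + 1 + l = l then (1 : ℝ) else 0) = fun _ => 0 := by
        funext s
        rw [if_neg (by omega)]
      rw [if_neg (lt_irrefl l), hzero, expectBernSum.const]
      ring

lemma sum_state_eq_probLt (hP : memP k n x y)
    (hy : ∀ i ∈ Icc 1 n, ∀ l ∈ Icc 1 k, y i l = τ i * x i l) {t : ℕ} (ht : t < n) :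
    ∑ l ∈ Icc 1 k, x (t + 1) l = probLt τ t k := by
  have hind : ∀ s : ℕ, ∑ l ∈ Icc 1 k, (if s + l = k then (1 : ℝ) else 0) =
      if s < k then 1 else 0 := by
    intro s
    have hiff : ∀ l ∈ Icc 1 k, s + l = k ↔ k - s = l := fun l hl => by simp at hl; omega
    rw [sum_congr rfl fun l hl => if_congr (hiff l hl) rfl rfl, sum_ite_eq]
    exact if_congr (by simp; omega) rfl rfl
  rw [sum_congr rfl (hP.state_eq_expectBernSum hy ht), ← expectBernSum.sum, probLt_eq_expectBernSum]
  simp only [hind]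

lemma coverSum_eq (hP : memP k n x y) (hy : ∀ i ∈ Icc 1 n, ∀ l ∈ Icc 1 k, y i l = τ i * x i l)
    (G : ℕ → ℕ → ℝ) (j : ℕ) :
    coverSum k n G j x y = ∑ i ∈ Icc 1 n, min (τ i) (G i j) * probLt τ (i - 1) k := by
  refine sum_congr rfl fun i hi => ?_
  obtain ⟨t, rfl⟩ : ∃ t, i = t + 1 := ⟨i - 1, by simp at hi; omega⟩
  rw [Nat.add_sub_cancel, ← hP.sum_state_eq_probLt hy (by simp at hi; omega), mul_sum]
  refine sum_congr rfl fun l hl => ?_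
  obtain ⟨hy0, hyx⟩ := hP.2.2.2 _ hi l hl
  rw [hy _ hi l hl, min_mul_of_nonneg _ _ (hy0.trans hyx)]

end memP

namespace IsTypeDist

variable {n m : ℕ} {G : ℕ → ℕ → ℝ} {i : ℕ}

lemma apply_mem_Icc (hG : IsTypeDist n m G) (hi : i ∈ Icc 1 n) {j : ℕ} (hj : j ≤ m) :
    G i j ∈ Set.Icc 0 1 := by
  obtain ⟨h0, hm, hstep⟩ := hG i hi
  have hmono : MonotoneOn (G i) (Set.Iic m) :=
    monotoneOn_of_le_succ Set.ordConnected_Iic fun a _ _ ha => by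
      simpa [Order.succ_eq_add_one] using hstep (a + 1) (by simp at ha ⊢; omega)
  exact ⟨h0 ▸ hmono (by simp) hj (Nat.zero_le j), hm ▸ hmono hj Set.self_mem_Iic hj⟩

lemma tauOf_mem_Icc (hG : IsTypeDist n m G) (hi : i ∈ Icc 1 n) {J : ℕ} (hJ : J ∈ Icc 1 m)
    {ρ : ℝ} (hρ : ρ ∈ Set.Icc 0 1) : tauOf G J ρ i ∈ Set.Icc 0 1 := by
  have hJ' := Finset.mem_Icc.1 hJ
  simpa only [tauOf, smul_eq_mul, sub_add_cancel] using
    convex_Icc (0 : ℝ) 1 (hG.apply_mem_Icc hi (by omega)) (hG.apply_mem_Icc hi hJ'.2)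
      (sub_nonneg.2 hρ.2) hρ.1 (sub_add_cancel 1 ρ)

end IsTypeDist

noncomputable def extendTypeDist (n m : ℕ) (G : ℕ → ℕ → ℝ) (a : ℝ) (i j : ℕ) : ℝ :=
  if j = 0 then 0 else if j = m + 2 then 1 else if i = n then a else G i (j - 1)

namespace extendTypeDist

variable {n m : ℕ} {G : ℕ → ℕ → ℝ} {a : ℝ} {i j : ℕ}

lemma apply_self (hj : j ∈ Icc 1 (m + 1)) : extendTypeDist n m G a n j = a := by
  simp only [Finset.mem_Icc] at hj
  simp [extendTypeDist, show j ≠ 0 by omega, show j ≠ m + 2 by omega]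

lemma apply_of_ne (hi : i ≠ n) (hj : j ∈ Icc 1 (m + 1)) :
    extendTypeDist n m G a i j = G i (j - 1) := by
  simp only [Finset.mem_Icc] at hj
  simp [extendTypeDist, show j ≠ 0 by omega, show j ≠ m + 2 by omega, hi]

end extendTypeDist

lemma IsTypeDist.extend {n m : ℕ} {G : ℕ → ℕ → ℝ} (hG : IsTypeDist n m G) {a : ℝ}
    (ha : a ∈ Set.Icc 0 1) : IsTypeDist n (m + 2) (extendTypeDist n m G a) := by
  intro i hi
  refine ⟨by simp [extendTypeDist], by simp [extendTypeDist], fun j hj => ?_⟩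
  obtain ⟨hG0, hGm, hstep⟩ := hG i hi
  rcases (by simp at hj ⊢; omega : j = 1 ∨ j - 1 ∈ Icc 1 m ∨ j = m + 2) with rfl | hj | rfl
  · by_cases hin : i = n <;> simp [extendTypeDist, hin, hG0, ha.1]
  · have hj' : j ∈ Icc 1 (m + 1) := by simp at hj ⊢; omega
    by_cases hin : i = n
    · rw [hin, extendTypeDist.apply_self hj', extendTypeDist.apply_self (by simp at hj ⊢; omega)]
    · rw [extendTypeDist.apply_of_ne hin hj',
        extendTypeDist.apply_of_ne hin (by simp at hj ⊢; omega)]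
      exact hstep _ hj
  · by_cases hin : i = n <;> simp [extendTypeDist, hin, hGm, ha.2]

section Extension

variable {k n m : ℕ} {G : ℕ → ℕ → ℝ} {a ρ : ℝ} {i : ℕ}

lemma QProph_extendTypeDist_one (hk : 1 ≤ k) (hG : IsTypeDist (n + 1) m G) :
    QProph k (n + 1) (extendTypeDist (n + 1) m G a) 1 = a := by
  rw [QProph, eMinBer_succ_of_forall_eq_zero hk, extendTypeDist.apply_self (by simp)]
  intro i hi
  simp only [Finset.mem_Icc] at hi
  rw [extendTypeDist.apply_of_ne (by omega) (by simp), Nat.sub_self, (hG i (by simp; omega)).1]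

lemma QProph_extendTypeDist_succ_top (hkn : k ≤ n) (hG : IsTypeDist (n + 1) m G) :
    QProph k (n + 1) (extendTypeDist (n + 1) m G a) (m + 1) = k := by
  rw [QProph, eMinBer_succ_of_forall_eq_one hkn]
  intro i hi
  simp only [Finset.mem_Icc] at hi
  rw [extendTypeDist.apply_of_ne (by omega) (by simp), Nat.add_sub_cancel,
    (hG i (by simp; omega)).2.1]

lemma tauOf_extendTypeDist_one {n' : ℕ} (hG : IsTypeDist n m G) (hi : i ∈ Icc 1 n)
    (hin : i ≠ n') : tauOf (extendTypeDist n' m G a) 1 ρ i = 0 := by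
  simp [tauOf, extendTypeDist, hin, (hG i hi).1]

lemma tauOf_extendTypeDist_succ {J : ℕ} (hin : i ≠ n) (hJ : J ∈ Icc 1 m) :
    tauOf (extendTypeDist n m G a) (J + 1) ρ i = tauOf G J ρ i := by
  simp only [Finset.mem_Icc] at hJ
  rw [tauOf, tauOf, Nat.add_sub_cancel, extendTypeDist.apply_of_ne hin (by simp; omega),
    extendTypeDist.apply_of_ne hin (by simp; omega), Nat.add_sub_cancel]

lemma tauOf_extendTypeDist_top {n' : ℕ} (hG : IsTypeDist n m G) (hi : i ∈ Icc 1 n)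
    (hin : i ≠ n') : tauOf (extendTypeDist n' m G a) (m + 2) ρ i = 1 := by
  rw [tauOf, show m + 2 - 1 = m + 1 by omega, extendTypeDist.apply_of_ne hin (by simp),
    Nat.add_sub_cancel, (hG i hi).2.1]
  simp [extendTypeDist]

variable {x y : ℕ → ℕ → ℝ} {τ : ℕ → ℝ}

lemma coverSum_extendTypeDist_one (hG : IsTypeDist (n + 1) m G)
    (hτ : ∀ i ∈ Icc 1 n, 0 ≤ τ i) (hP : memP k (n + 1) x y)
    (hy : ∀ i ∈ Icc 1 (n + 1), ∀ l ∈ Icc 1 k, y i l = τ i * x i l) :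
    coverSum k (n + 1) (extendTypeDist (n + 1) m G a) 1 x y = min (τ (n + 1)) a * probLt τ n k := by
  rw [hP.coverSum_eq hy, sum_Icc_succ_top (by omega), Nat.add_sub_cancel,
    extendTypeDist.apply_self (by simp), sum_eq_zero, zero_add]
  intro i hi
  simp only [Finset.mem_Icc] at hi
  rw [extendTypeDist.apply_of_ne (by omega) (by simp), Nat.sub_self, (hG i (by simp; omega)).1,
    min_eq_right (hτ i (by simp; omega)), zero_mul]

lemma coverSum_extendTypeDist_succ_top (hG : IsTypeDist (n + 1) m G)
    (hτ : ∀ i ∈ Icc 1 n, τ i ≤ 1) (hP : memP k (n + 1) x y)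
    (hy : ∀ i ∈ Icc 1 (n + 1), ∀ l ∈ Icc 1 k, y i l = τ i * x i l) :
    coverSum k (n + 1) (extendTypeDist (n + 1) m G a) (m + 1) x y =
      eMinBer τ n k + min (τ (n + 1)) a * probLt τ n k := by
  rw [hP.coverSum_eq hy, sum_Icc_succ_top (by omega), Nat.add_sub_cancel,
    extendTypeDist.apply_self (by simp), eMinBer_eq_sum_mul_probLt]
  congr 1
  refine sum_congr rfl fun i hi => ?_
  simp only [Finset.mem_Icc] at hi
  rw [extendTypeDist.apply_of_ne (by omega) (by simp), Nat.add_sub_cancel,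
    (hG i (by simp; omega)).2.1, min_eq_left (hτ i (by simp; omega))]

end Extension

section Bound

variable {k n m : ℕ} {G : ℕ → ℕ → ℝ} {a ρ : ℝ} {J : ℕ}

lemma innerLP_extendTypeDist_le (hk : 1 ≤ k) (hkn : k ≤ n) (hG : IsTypeDist (n + 1) m G)
    (ha : a ∈ Set.Ioc 0 1) (hJ : J ∈ Icc 1 (m + 2)) (hρ : ρ ∈ Set.Icc 0 1) :
    innerLP_OST k (n + 1) (m + 2) (extendTypeDist (n + 1) m G a) J ρ
        (QProph k (n + 1) (extendTypeDist (n + 1) m G a)) ≤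
      min (probLt (tauOf (extendTypeDist (n + 1) m G a) J ρ) n k)
        (eMinBer (tauOf (extendTypeDist (n + 1) m G a) J ρ) n k / k) + a := by
  set τ := tauOf (extendTypeDist (n + 1) m G a) J ρ
  have hτ : ∀ i ∈ Icc 1 n, τ i ∈ Set.Icc 0 1 := fun i hi =>
    (hG.extend (Set.Ioc_subset_Icc_self ha)).tauOf_mem_Icc (Icc_subset_Icc_right n.le_succ hi) hJ hρ
  have hk0 : (0 : ℝ) < k := by exact_mod_cast hk
  have hP0 := probLt_nonneg (k := k) hτ
  have hP1 := probLt_le_one (k := k) hτ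
  have hlast : min (τ (n + 1)) a * probLt τ n k ≤ a * probLt τ n k :=
    mul_le_mul_of_nonneg_right (min_le_right _ _) hP0
  refine Real.sSup_le ?_ (add_nonneg (min_probLt_eMinBer_div_mem_Icc hτ).1 ha.1.le)
  rintro θ ⟨x, y, hP, hy, hθ⟩
  have hθ1 := hθ 1 (by simp)
  have hθm := hθ (m + 1) (by simp)
  rw [QProph_extendTypeDist_one hk hG,
    coverSum_extendTypeDist_one hG (fun i hi => (hτ i hi).1) hP hy] at hθ1
  rw [QProph_extendTypeDist_succ_top hkn hG,
    coverSum_extendTypeDist_succ_top hG (fun i hi => (hτ i hi).2) hP hy] at hθm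
  have hθP : θ ≤ probLt τ n k := le_of_mul_le_mul_right (by linarith) ha.1
  have hθE : θ ≤ eMinBer τ n k / k + a := by
    have haP : a * probLt τ n k ≤ a * k :=
      mul_le_mul_of_nonneg_left (hP1.trans (by exact_mod_cast hk)) ha.1.le
    rw [div_add' _ _ _ hk0.ne', le_div_iff₀ hk0]
    linarith
  rw [← sub_le_iff_le_add]
  exact le_min (by linarith [ha.1]) (by linarith)

lemma min_extendTypeDist_le (hkn : k ≤ n) (hG : IsTypeDist (n + 1) m G) {B : ℝ} (hB0 : 0 ≤ B)
    (hB : ∀ J ∈ Icc 1 m, ∀ ρ ∈ Set.Ioc (0 : ℝ) 1,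
      min (probLt (tauOf G J ρ) n k) (eMinBer (tauOf G J ρ) n k / k) ≤ B)
    (hJ : J ∈ Icc 1 (m + 2)) (hρ : ρ ∈ Set.Ioc 0 1) :
    min (probLt (tauOf (extendTypeDist (n + 1) m G a) J ρ) n k)
      (eMinBer (tauOf (extendTypeDist (n + 1) m G a) J ρ) n k / k) ≤ B := by
  have hagent : ∀ i ∈ Icc 1 n, i ∈ Icc 1 (n + 1) ∧ i ≠ n + 1 := fun i hi =>
    ⟨Icc_subset_Icc_right n.le_succ hi, by simp at hi; omega⟩
  rcases (by simp at hJ ⊢; omega : J = 1 ∨ J - 1 ∈ Icc 1 m ∨ J = m + 2) with rfl | hJ | rfl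
  · have hzero : eMinBer (tauOf (extendTypeDist (n + 1) m G a) 1 ρ) n k = 0 := by
      rw [eMinBer_eq_expectBernSum, expectBernSum.of_forall_eq_zero fun i hi =>
        tauOf_extendTypeDist_one hG (hagent i hi).1 (hagent i hi).2]
      simp
    rw [hzero, zero_div]
    exact (min_le_right _ _).trans hB0
  · obtain ⟨J, rfl⟩ : ∃ J', J = J' + 1 := ⟨J - 1, by simp at hJ; omega⟩
    rw [Nat.add_sub_cancel] at hJ
    have hτ := fun i hi => tauOf_extendTypeDist_succ (G := G) (a := a) (ρ := ρ) (hagent i hi).2 hJ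
    rw [probLt_eq_expectBernSum, eMinBer_eq_expectBernSum, expectBernSum.congr_left hτ,
      expectBernSum.congr_left hτ, ← probLt_eq_expectBernSum, ← eMinBer_eq_expectBernSum]
    exact hB J hJ ρ hρ
  · have hzero : probLt (tauOf (extendTypeDist (n + 1) m G a) (m + 2) ρ) n k = 0 := by
      rw [probLt_eq_expectBernSum, expectBernSum.of_forall_eq_one fun i hi =>
        tauOf_extendTypeDist_top hG (hagent i hi).1 (hagent i hi).2, if_neg (not_lt.2 hkn)]
    rw [hzero]
    exact (min_le_left _ _).trans hB0

end Bound

lemma sSup_innerLP_extendTypeDist_le {k n m : ℕ} {G : ℕ → ℕ → ℝ} {a B : ℝ} (hk : 1 ≤ k)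
    (hkn : k ≤ n) (hG : IsTypeDist (n + 1) m G) (ha : a ∈ Set.Ioc 0 1) (hB0 : 0 ≤ B)
    (hB : ∀ J ∈ Icc 1 m, ∀ ρ ∈ Set.Ioc (0 : ℝ) 1,
      min (probLt (tauOf G J ρ) n k) (eMinBer (tauOf G J ρ) n k / k) ≤ B) :
    sSup {w : ℝ | ∃ J ∈ Icc 1 (m + 2), ∃ ρ ∈ Set.Ioc (0 : ℝ) 1,
      w = innerLP_OST k (n + 1) (m + 2) (extendTypeDist (n + 1) m G a) J ρ
        (QProph k (n + 1) (extendTypeDist (n + 1) m G a))} ≤ B + a := by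
  refine Real.sSup_le ?_ (add_nonneg hB0 ha.1.le)
  rintro _ ⟨J, hJ, ρ, hρ, rfl⟩
  exact (innerLP_extendTypeDist_le hk hkn hG ha hJ (Set.Ioc_subset_Icc_self hρ)).trans
    (add_le_add_left (min_extendTypeDist_le hkn hG hB0 hB hJ hρ) a)

lemma Real.sInf_le_of_mem_of_nonneg {s : Set ℝ} {x b : ℝ} (hx : x ∈ s) (hxb : x ≤ b)
    (hb : 0 ≤ b) : sInf s ≤ b := by
  by_cases hs : BddBelow s
  · exact csInf_le_of_le hs hx hxb
  · rwa [Real.sInf_of_not_bddBelow hs]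

theorem stmt8_general (k n : ℕ) (hk : 1 ≤ k) (hkn : k < n) (m : ℕ)
    (G : ℕ → ℕ → ℝ) (hG : IsTypeDist n m G) :
    sInf {v : ℝ | ∃ m', 1 ≤ m' ∧ ∃ G', IsTypeDist n m' G' ∧
        v = sSup {w : ℝ | ∃ J ∈ Finset.Icc 1 m', ∃ ρ ∈ Set.Ioc (0:ℝ) 1,
          w = innerLP_OST k n m' G' J ρ (QProph k n G')}}
      ≤ sSup {w : ℝ | ∃ J ∈ Finset.Icc 1 m, ∃ ρ ∈ Set.Ioc (0:ℝ) 1,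
          w = min (probLt (tauOf G J ρ) (n-1) k) (eMinBer (tauOf G J ρ) (n-1) k / k)} := by
  obtain ⟨n, rfl⟩ : ∃ n', n = n' + 1 := ⟨n - 1, by omega⟩
  rw [Nat.add_sub_cancel]
  set B := sSup {w : ℝ | ∃ J ∈ Finset.Icc 1 m, ∃ ρ ∈ Set.Ioc (0:ℝ) 1,
    w = min (probLt (tauOf G J ρ) n k) (eMinBer (tauOf G J ρ) n k / k)}
  have hbounds : ∀ J ∈ Icc 1 m, ∀ ρ ∈ Set.Ioc (0 : ℝ) 1,
      min (probLt (tauOf G J ρ) n k) (eMinBer (tauOf G J ρ) n k / k) ∈ Set.Icc 0 1 := by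
    intro J hJ ρ hρ
    exact min_probLt_eMinBer_div_mem_Icc fun i hi =>
      hG.tauOf_mem_Icc (Icc_subset_Icc_right n.le_succ hi) hJ (Set.Ioc_subset_Icc_self hρ)
  have hB : ∀ J ∈ Icc 1 m, ∀ ρ ∈ Set.Ioc (0 : ℝ) 1,
      min (probLt (tauOf G J ρ) n k) (eMinBer (tauOf G J ρ) n k / k) ≤ B := fun J hJ ρ hρ =>
    le_csSup ⟨1, by rintro _ ⟨J, hJ, ρ, hρ, rfl⟩; exact (hbounds J hJ ρ hρ).2⟩ ⟨J, hJ, ρ, hρ, rfl⟩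
  have hB0 : 0 ≤ B :=
    Real.sSup_nonneg (by rintro _ ⟨J, hJ, ρ, hρ, rfl⟩; exact (hbounds J hJ ρ hρ).1)
  refine le_of_forall_pos_le_add fun ε hε => ?_
  have ha : min ε 1 ∈ Set.Ioc 0 1 := ⟨lt_min hε one_pos, min_le_right _ _⟩
  calc _ ≤ B + min ε 1 := by
        refine Real.sInf_le_of_mem_of_nonneg ?_
          (sSup_innerLP_extendTypeDist_le hk (by omega) hG ha hB0 hB) (by linarith [ha.1])
        exact ⟨m + 2, by omega, _, hG.extend (Set.Ioc_subset_Icc_self ha), rfl⟩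
    _ ≤ B + ε := add_le_add_right (min_le_left _ _) B

/-- upper bound for OST versus the prophet: the worst-case OST guarantee is at
most the best-possible `min{availability, fill-rate}` bound computed on any fixed `G`. -/
theorem stmt8 (k n : ℕ) (hk : 1 ≤ k) (hkn : k < n) (m : ℕ) (hm : 1 ≤ m)
    (G : ℕ → ℕ → ℝ) (hG : IsTypeDist n m G) :
    sInf {v : ℝ | ∃ m', 1 ≤ m' ∧ ∃ G', IsTypeDist n m' G' ∧
        v = sSup {w : ℝ | ∃ J ∈ Finset.Icc 1 m', ∃ ρ ∈ Set.Ioc (0:ℝ) 1,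
          w = innerLP_OST k n m' G' J ρ (QProph k n G')}}
      ≤ sSup {w : ℝ | ∃ J ∈ Finset.Icc 1 m, ∃ ρ ∈ Set.Ioc (0:ℝ) 1,
          w = min (probLt (tauOf G J ρ) (n-1) k) (eMinBer (tauOf G J ρ) (n-1) k / k)} :=
  stmt8_general k n hk hkn m G hG
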